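/- arXiv:1901.02470 — 4 statements merged into one kernel-verified Lean document; each statement's English description precedes it below -/
import Mathlib

section
/- Wedin's sin-Theta theorem (as restated in the paper): Let A and Ã be real m×n matrices. Suppose [U₁ U₂ U₃] ∈ ℝ^{m×m} and [V₁ V₂] ∈ ℝ^{n×n} are orthogonal matrices such that U₁ᵀAV₁ = Σ₁ and U₂ᵀAV₂ = Σ₂ are diagonal with nonnegative entries while U₁ᵀAV₂ = 0, U₂ᵀAV₁ = 0, U₃ᵀAV₁ = 0, and U₃ᵀAV₂ = 0, and similarly [Ũ₁ Ũ₂ Ũ₃] and [Ṽ₁ Ṽ₂] are orthogonal with Ũ₁ᵀÃṼ₁ = Σ̃₁ and Ũ₂ᵀÃṼ₂ = Σ̃₂ diagonal with nonnegative entries and the corresponding off-diagonal blocks zero. Suppose there is δ > 0 such that every diagonal entry of Σ̃₁ differs from every diagonal entry of Σ₂ by at least δ, and every diagonal entry of Σ̃₁ is at least δ. Define R = AṼ₁ − Ũ₁Σ̃₁, S = AᵀŨ₁ − Ṽ₁Σ̃₁, U₁⊥ = [U₂ U₃], and V₁⊥ = V₂. Then √(‖U₁⊥ᵀŨ₁‖_F²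 + ‖V₁⊥ᵀṼ₁‖_F²) ≤ √(‖R‖_F² + ‖S‖_F²)/δ. -/
open Matrix

/-- Frobenius norm of a real matrix. -/
noncomputable def frobNorm {m n : Type*} [Fintype m] [Fintype n] (M : Matrix m n ℝ) : ℝ :=
  Real.sqrt (∑ i, ∑ j, (M i j) ^ 2)

/-- A (possibly rectangular) matrix is "diagonal with nonnegative entries":
off-diagonal entries vanish and diagonal entries are nonnegative. -/
def RectDiagNonneg {a b : ℕ} (M : Matrix (Fin a) (Fin b) ℝ) : Prop :=
  (∀ (i : Fin a) (j : Fin b), (i : ℕ) ≠ (j : ℕ) → M i j = 0) ∧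
  (∀ (i : Fin a) (j : Fin b), (i : ℕ) = (j : ℕ) → 0 ≤ M i j)

/-!
Expanding `Ṽ₁` along `[V₁ V₂]` and `Ũ₁` along `[U₁ U₂ U₃]`, the vanishing blocks of `A` give
`U₂ᵀR = Σ₂Y - PΣ̃₁`, `U₃ᵀR = -QΣ̃₁` and `V₂ᵀS = Σ₂ᵀP - YΣ̃₁` with `P = U₂ᵀŨ₁`, `Q = U₃ᵀŨ₁`,
`Y = V₂ᵀṼ₁`. As `Σ₂` and `Σ̃₁` are diagonal, these split column by column and index by index into
the scalar inequality `(s y - σ p)² + (s p - σ y)² ≥ (σ - s)² (p² + y²)` (valid when `s σ ≥ 0`),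
and the separation hypothesis bounds `(σ - s)²` below by `δ²`. Projecting `R` and `S` onto
`[U₂ U₃]` and `V₂` can only decrease their Frobenius norms.
-/

open Finset

section FrobeniusNorm

variable {a b c : Type*} [Fintype a] [Fintype b] [Fintype c]

lemma frobNorm_sq (M : Matrix a b ℝ) : frobNorm M ^ 2 = ∑ i, ∑ j, M i j ^ 2 :=
  Real.sq_sqrt (by positivity)

lemma frobNorm_sq_eq_sum_col (M : Matrix a b ℝ) : frobNorm M ^ 2 = ∑ j, ∑ i, M i j ^ 2 := by
  rw [frobNorm_sq, sum_comm]

lemma frobNorm_sq_eq_trace (M : Matrix a b ℝ) : frobNorm M ^ 2 = trace (Mᵀ * M) := by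
  rw [frobNorm_sq_eq_sum_col]
  simp [trace, mul_apply, sq]

lemma frobNorm_neg (M : Matrix a b ℝ) : frobNorm (-M) = frobNorm M := by
  simp [frobNorm]

lemma frobNorm_fromRows_sq (M : Matrix a c ℝ) (N : Matrix b c ℝ) :
    frobNorm (fromRows M N) ^ 2 = frobNorm M ^ 2 + frobNorm N ^ 2 := by
  simp [frobNorm_sq, Fintype.sum_sum_type]

lemma frobNorm_transpose_mul_sq [DecidableEq c] (W : Matrix c a ℝ) (hW : W * Wᵀ = 1)
    (M : Matrix c b ℝ) : frobNorm (Wᵀ * M) ^ 2 = frobNorm M ^ 2 := by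
  rw [frobNorm_sq_eq_trace, frobNorm_sq_eq_trace, transpose_mul, transpose_transpose,
    Matrix.mul_assoc, ← Matrix.mul_assoc W, hW, Matrix.one_mul]

lemma frobNorm_transpose_mul_sq_le {d : Type*} [Fintype d] [DecidableEq c]
    (W₁ : Matrix c a ℝ) (W₂ : Matrix c d ℝ) (hW : fromCols W₁ W₂ * (fromCols W₁ W₂)ᵀ = 1)
    (M : Matrix c b ℝ) : frobNorm (W₂ᵀ * M) ^ 2 ≤ frobNorm M ^ 2 := by
  have := frobNorm_transpose_mul_sq _ hW M
  rw [transpose_fromCols, fromRows_mul, frobNorm_fromRows_sq] at this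
  nlinarith [sq_nonneg (frobNorm (W₁ᵀ * M))]

end FrobeniusNorm

lemma mul_eq_mul_mul_of_mul_eq_zero {R a b c d n : Type*} [Semiring R] [Fintype a] [Fintype b]
    [Fintype n] [DecidableEq n] {W₁ : Matrix n a R} {W₂ : Matrix n b R}
    (hW : fromCols W₁ W₂ * (fromCols W₁ W₂)ᵀ = 1) {B : Matrix c n R} (hB : B * W₁ = 0)
    (T : Matrix n d R) : B * T = B * W₂ * (W₂ᵀ * T) := by
  rw [transpose_fromCols, fromCols_mul_fromRows] at hW
  calc B * T = B * (W₁ * W₁ᵀ + W₂ * W₂ᵀ) * T := by rw [hW, Matrix.mul_one]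
    _ = B * W₂ * (W₂ᵀ * T) := by
      simp only [Matrix.mul_add, ← Matrix.mul_assoc, hB, Matrix.zero_mul, zero_add]

lemma transpose_transpose_mul_mul {R m n k l : Type*} [CommSemiring R] [Fintype m] [Fintype n]
    (U : Matrix m k R) (A : Matrix m n R) (V : Matrix n l R) : (Uᵀ * A * V)ᵀ = Vᵀ * Aᵀ * U := by
  simp [transpose_mul, Matrix.mul_assoc]

section Residuals

variable {R m n ι : Type*} [CommRing R] [Fintype m] [Fintype n] [Fintype ι] {A : Matrix m n R}

lemma transpose_fromCols_mul_residual {k₂ k₃ l₁ l₂ : Type*} [DecidableEq n] [Fintype l₁]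
    [Fintype l₂] {U₂ : Matrix m k₂ R} {U₃ : Matrix m k₃ R} {V₁ : Matrix n l₁ R}
    {V₂ : Matrix n l₂ R} (hV : fromCols V₁ V₂ * (fromCols V₁ V₂)ᵀ = 1)
    (h₂₁ : U₂ᵀ * A * V₁ = 0) (h₃₁ : U₃ᵀ * A * V₁ = 0) (h₃₂ : U₃ᵀ * A * V₂ = 0)
    (X : Matrix m ι R) (T : Matrix n ι R) (E : Matrix ι ι R) :
    (fromCols U₂ U₃)ᵀ * (A * T - X * E) =
      fromRows (U₂ᵀ * A * V₂ * (V₂ᵀ * T) - U₂ᵀ * X * E) (-(U₃ᵀ * X * E)) := by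
  have hAV₁ : (fromCols U₂ U₃)ᵀ * A * V₁ = 0 := by
    simp [transpose_fromCols, fromRows_mul, h₂₁, h₃₁]
  rw [Matrix.mul_sub, ← Matrix.mul_assoc, mul_eq_mul_mul_of_mul_eq_zero hV hAV₁]
  simp only [transpose_fromCols, fromRows_mul, h₃₂, Matrix.zero_mul]
  ext (i | i) j <;> simp [Matrix.mul_assoc]

lemma transpose_mul_transpose_residual {k₁ k₂ k₃ l₂ : Type*} [DecidableEq m] [Fintype k₁]
    [Fintype k₂] [Fintype k₃] {U₁ : Matrix m k₁ R} {U₂ : Matrix m k₂ R} {U₃ : Matrix m k₃ R}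
    {V₂ : Matrix n l₂ R}
    (hU : fromCols U₁ (fromCols U₂ U₃) * (fromCols U₁ (fromCols U₂ U₃))ᵀ = 1)
    (h₁₂ : U₁ᵀ * A * V₂ = 0) (h₃₂ : U₃ᵀ * A * V₂ = 0)
    (X : Matrix m ι R) (T : Matrix n ι R) (E : Matrix ι ι R) :
    V₂ᵀ * (Aᵀ * X - T * E) = (U₂ᵀ * A * V₂)ᵀ * (U₂ᵀ * X) - V₂ᵀ * T * E := by
  have hAU₁ : V₂ᵀ * Aᵀ * U₁ = 0 := by rw [← transpose_transpose_mul_mul, h₁₂, transpose_zero]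
  rw [Matrix.mul_sub, ← Matrix.mul_assoc, mul_eq_mul_mul_of_mul_eq_zero hU hAU₁, mul_fromCols,
    ← transpose_transpose_mul_mul, ← transpose_transpose_mul_mul, h₃₂, transpose_zero,
    transpose_fromCols, fromRows_mul, fromCols_mul_fromRows, Matrix.zero_mul, add_zero,
    Matrix.mul_assoc V₂ᵀ]

end Residuals

lemma sum_fin_eq_sum_range_of_le {M : Type*} [AddCommMonoid M] {k N : ℕ} (hkN : k ≤ N)
    (f : ℕ → M) (hf : ∀ i, k ≤ i → f i = 0) : ∑ i : Fin k, f i = ∑ i ∈ range N, f i := by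
  rw [Fin.sum_univ_eq_sum_range]
  exact sum_subset (range_subset_range.2 hkN) fun i _ hi => hf i (by simpa using hi)

lemma sq_sub_mul_add_sq_le {s σ : ℝ} (hsσ : 0 ≤ s * σ) (p y : ℝ) :
    (σ - s) ^ 2 * (p ^ 2 + y ^ 2) ≤ (s * y - σ * p) ^ 2 + (s * p - σ * y) ^ 2 := by
  have h : (s * y - σ * p) ^ 2 + (s * p - σ * y) ^ 2 =
      (σ - s) ^ 2 * (p ^ 2 + y ^ 2) + 2 * (s * σ) * (p - y) ^ 2 := by ring
  rw [h]
  have := mul_nonneg hsσ (sq_nonneg (p - y))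
  linarith

section RectDiag

variable {k l : ℕ}

/- Indexing by `ℕ` lets the rows of a rectangular diagonal matrix on `Fin k × Fin l` be paired
with its columns. -/
def extendByZero (v : Fin k → ℝ) (i : ℕ) : ℝ := if h : i < k then v ⟨i, h⟩ else 0

def rectDiagEntries (G : Matrix (Fin k) (Fin l) ℝ) (i : ℕ) : ℝ :=
  if h : i < k ∧ i < l then G ⟨i, h.1⟩ ⟨i, h.2⟩ else 0

@[simp]
lemma extendByZero_val (v : Fin k → ℝ) (i : Fin k) : extendByZero v i = v i := by
  simp [extendByZero]

lemma extendByZero_of_le (v : Fin k → ℝ) {i : ℕ} (hi : k ≤ i) : extendByZero v i = 0 :=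
  dif_neg hi.not_gt

lemma rectDiagEntries_of_le_left (G : Matrix (Fin k) (Fin l) ℝ) {i : ℕ} (hi : k ≤ i) :
    rectDiagEntries G i = 0 :=
  dif_neg fun h => hi.not_gt h.1

lemma rectDiagEntries_transpose (G : Matrix (Fin k) (Fin l) ℝ) :
    rectDiagEntries Gᵀ = rectDiagEntries G := by
  ext i
  simp only [rectDiagEntries, and_comm, transpose_apply]

lemma mulVec_apply_of_offDiag_eq_zero {G : Matrix (Fin k) (Fin l) ℝ}
    (hG : ∀ (i : Fin k) (j : Fin l), (i : ℕ) ≠ j → G i j = 0) (y : Fin l → ℝ) (i : Fin k) :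
    (G *ᵥ y) i = rectDiagEntries G i * extendByZero y i := by
  simp only [mulVec, dotProduct, rectDiagEntries, extendByZero]
  by_cases h : (i : ℕ) < l
  · rw [dif_pos ⟨i.isLt, h⟩, dif_pos h]
    refine sum_eq_single_of_mem _ (mem_univ _) fun j _ hj => ?_
    rw [hG i j fun he => hj (Fin.ext he.symm), zero_mul]
  · rw [dif_neg fun h' => h h'.2, zero_mul]
    exact sum_eq_zero fun j _ => by rw [hG i j fun he => h (he ▸ j.isLt), zero_mul]

lemma RectDiagNonneg.transpose {G : Matrix (Fin k) (Fin l) ℝ} (hG : RectDiagNonneg G) :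
    RectDiagNonneg Gᵀ :=
  ⟨fun i j h => hG.1 j i (Ne.symm h), fun i j h => hG.2 j i h.symm⟩

lemma RectDiagNonneg.rectDiagEntries_nonneg {G : Matrix (Fin k) (Fin l) ℝ}
    (hG : RectDiagNonneg G) (i : ℕ) : 0 ≤ rectDiagEntries G i := by
  unfold rectDiagEntries
  split_ifs
  exacts [hG.2 _ _ rfl, le_rfl]

lemma rectDiagEntries_of_le_right (G : Matrix (Fin k) (Fin l) ℝ) {i : ℕ} (hi : l ≤ i) :
    rectDiagEntries G i = 0 := by
  rw [← rectDiagEntries_transpose, rectDiagEntries_of_le_left _ hi]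

lemma sq_mul_sum_sq_le_of_rectDiagNonneg {G : Matrix (Fin k) (Fin l) ℝ} (hG : RectDiagNonneg G)
    {δ σ : ℝ} (hδ : 0 ≤ δ) (hσ : δ ≤ σ)
    (hsep : ∀ (i : Fin k) (j : Fin l), (i : ℕ) = j → δ ≤ |σ - G i j|)
    (p : Fin k → ℝ) (y : Fin l → ℝ) :
    δ ^ 2 * (∑ i, p i ^ 2 + ∑ i, y i ^ 2) ≤
      ∑ i, ((G *ᵥ y) i - σ * p i) ^ 2 + ∑ i, ((Gᵀ *ᵥ p) i - σ * y i) ^ 2 := by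
  set s := rectDiagEntries G
  set p' := extendByZero p
  set y' := extendByZero y
  set N := max k l
  have hp : ∑ i, p i ^ 2 = ∑ i ∈ range N, p' i ^ 2 := by
    simp_rw [← extendByZero_val p]
    exact sum_fin_eq_sum_range_of_le (le_max_left k l) (fun i => p' i ^ 2) fun i hi => by
      simp [p', extendByZero_of_le p hi]
  have hy : ∑ i, y i ^ 2 = ∑ i ∈ range N, y' i ^ 2 := by
    simp_rw [← extendByZero_val y]
    exact sum_fin_eq_sum_range_of_le (le_max_right k l) (fun i => y' i ^ 2) fun i hi => by
      simp [y', extendByZero_of_le y hi]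
  have hGy : ∑ i, ((G *ᵥ y) i - σ * p i) ^ 2 =
      ∑ i ∈ range N, (s i * y' i - σ * p' i) ^ 2 := by
    simp_rw [mulVec_apply_of_offDiag_eq_zero hG.1, ← extendByZero_val p]
    exact sum_fin_eq_sum_range_of_le (le_max_left k l) (fun i => (s i * y' i - σ * p' i) ^ 2)
      fun i hi => by
      simp [s, p', rectDiagEntries_of_le_left G hi, extendByZero_of_le p hi]
  have hGp : ∑ i, ((Gᵀ *ᵥ p) i - σ * y i) ^ 2 =
      ∑ i ∈ range N, (s i * p' i - σ * y' i) ^ 2 := by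
    simp_rw [mulVec_apply_of_offDiag_eq_zero hG.transpose.1, rectDiagEntries_transpose,
      ← extendByZero_val y]
    exact sum_fin_eq_sum_range_of_le (le_max_right k l) (fun i => (s i * p' i - σ * y' i) ^ 2)
      fun i hi => by
      simp [s, y', rectDiagEntries_of_le_right G hi, extendByZero_of_le y hi]
  rw [hp, hy, hGy, hGp, ← sum_add_distrib, ← sum_add_distrib, mul_sum]
  refine sum_le_sum fun i _ => ?_
  have hsep' : δ ≤ |σ - s i| := by
    by_cases h : i < k ∧ i < l
    · simpa [s, rectDiagEntries, h] using hsep ⟨i, h.1⟩ ⟨i, h.2⟩ rfl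
    · simpa [s, rectDiagEntries, h, abs_of_nonneg (hδ.trans hσ)] using hσ
  calc δ ^ 2 * (p' i ^ 2 + y' i ^ 2) ≤ (σ - s i) ^ 2 * (p' i ^ 2 + y' i ^ 2) :=
        mul_le_mul_of_nonneg_right (by simpa using pow_le_pow_left₀ hδ hsep' 2) (by positivity)
    _ ≤ _ := sq_sub_mul_add_sq_le (mul_nonneg (hG.rectDiagEntries_nonneg i) (hδ.trans hσ)) _ _

end RectDiag

section DiagonalBounds

variable {ι : Type*} [Fintype ι] [DecidableEq ι] {δ : ℝ} {d : ι → ℝ}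

lemma sq_mul_frobNorm_sq_le_mul_diagonal {κ : Type*} [Fintype κ] (hδ : 0 ≤ δ)
    (hd : ∀ j, δ ≤ d j) (Q : Matrix κ ι ℝ) :
    δ ^ 2 * frobNorm Q ^ 2 ≤ frobNorm (Q * diagonal d) ^ 2 := by
  simp only [frobNorm_sq, mul_sum, mul_diagonal, mul_pow]
  refine sum_le_sum fun i _ => sum_le_sum fun j _ => ?_
  rw [mul_comm]
  exact mul_le_mul_of_nonneg_left (pow_le_pow_left₀ hδ (hd j) 2) (sq_nonneg _)

lemma sq_mul_frobNorm_sq_add_le_of_rectDiagNonneg {k l : ℕ} {G : Matrix (Fin k) (Fin l) ℝ}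
    (hG : RectDiagNonneg G) (hδ : 0 ≤ δ) (hd : ∀ j, δ ≤ d j)
    (hsep : ∀ j (i : Fin k) (i' : Fin l), (i : ℕ) = i' → δ ≤ |d j - G i i'|)
    (P : Matrix (Fin k) ι ℝ) (Y : Matrix (Fin l) ι ℝ) :
    δ ^ 2 * (frobNorm P ^ 2 + frobNorm Y ^ 2) ≤
      frobNorm (G * Y - P * diagonal d) ^ 2 + frobNorm (Gᵀ * P - Y * diagonal d) ^ 2 := by
  simp only [frobNorm_sq_eq_sum_col, ← sum_add_distrib, mul_sum]
  refine sum_le_sum fun j _ => ?_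
  refine (sq_mul_sum_sq_le_of_rectDiagNonneg hG hδ (hd j) (hsep j) (P · j) (Y · j)).trans_eq ?_
  congr 1 <;> refine sum_congr rfl fun i _ => ?_ <;>
    rw [Matrix.sub_apply, mul_diagonal, mul_comm] <;> rfl

end DiagonalBounds

lemma sqrt_le_sqrt_div_of_sq_mul_le {x y δ : ℝ} (hδ : 0 < δ) (hx : 0 ≤ x) (h : δ ^ 2 * x ≤ y) :
    √x ≤ √y / δ := by
  rw [le_div_iff₀ hδ, ← Real.sqrt_sq hδ.le, ← Real.sqrt_mul hx]
  exact Real.sqrt_le_sqrt (by linarith)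

theorem wedin_sin_theta_general
    {m n k₁ k₂ k₃ l₁ l₂ r : ℕ}
    (A At : Matrix (Fin m) (Fin n) ℝ)
    (U₁ : Matrix (Fin m) (Fin k₁) ℝ) (U₂ : Matrix (Fin m) (Fin k₂) ℝ)
    (U₃ : Matrix (Fin m) (Fin k₃) ℝ)
    (V₁ : Matrix (Fin n) (Fin l₁) ℝ) (V₂ : Matrix (Fin n) (Fin l₂) ℝ)
    (tU₁ : Matrix (Fin m) (Fin r) ℝ)
    (tV₁ : Matrix (Fin n) (Fin r) ℝ)
    -- [U₁ U₂ U₃] is orthogonal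
    (hUo' : fromCols U₁ (fromCols U₂ U₃) * (fromCols U₁ (fromCols U₂ U₃))ᵀ = 1)
    -- [V₁ V₂] is orthogonal
    (hVo' : fromCols V₁ V₂ * (fromCols V₁ V₂)ᵀ = 1)
    -- block structure of A
    (hS2 : RectDiagNonneg (U₂ᵀ * A * V₂))
    (hZ₁ : U₁ᵀ * A * V₂ = 0) (hZ₂ : U₂ᵀ * A * V₁ = 0)
    (hZ₃ : U₃ᵀ * A * V₁ = 0) (hZ₄ : U₃ᵀ * A * V₂ = 0)
    -- block structure of Ã
    (htS1 : RectDiagNonneg (tU₁ᵀ * At * tV₁))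
    (δ : ℝ) (hδ : 0 < δ)
    -- every diagonal entry of Σ̃₁ differs from every diagonal entry of Σ₂ by at least δ
    (hsep : ∀ (i : Fin r) (j : Fin r) (i' : Fin k₂) (j' : Fin l₂),
      (i : ℕ) = (j : ℕ) → (i' : ℕ) = (j' : ℕ) →
        δ ≤ |(tU₁ᵀ * At * tV₁) i j - (U₂ᵀ * A * V₂) i' j'|)
    -- every diagonal entry of Σ̃₁ is at least δ
    (hmin : ∀ (i : Fin r) (j : Fin r), (i : ℕ) = (j : ℕ) → δ ≤ (tU₁ᵀ * At * tV₁) i j) :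
    -- conclusion with R = AṼ₁ − Ũ₁Σ̃₁, S = AᵀŨ₁ − Ṽ₁Σ̃₁, U₁⊥ = [U₂ U₃], V₁⊥ = V₂
    Real.sqrt (frobNorm ((fromCols U₂ U₃)ᵀ * tU₁) ^ 2 + frobNorm (V₂ᵀ * tV₁) ^ 2) ≤
      Real.sqrt (frobNorm (A * tV₁ - tU₁ * (tU₁ᵀ * At * tV₁)) ^ 2 +
        frobNorm (Aᵀ * tU₁ - tV₁ * (tU₁ᵀ * At * tV₁)) ^ 2) / δ := by
  set E := tU₁ᵀ * At * tV₁
  have hE : E = diagonal E.diag :=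
    (IsDiag.diagonal_diag fun i j hij => htS1.1 i j (Fin.val_ne_of_ne hij)).symm
  have hd : ∀ j, δ ≤ E.diag j := fun j => hmin j j rfl
  have hR := transpose_fromCols_mul_residual hVo' hZ₂ hZ₃ hZ₄ tU₁ tV₁ E
  have hS := transpose_mul_transpose_residual hUo' hZ₁ hZ₄ tU₁ tV₁ E
  have hPY := sq_mul_frobNorm_sq_add_le_of_rectDiagNonneg hS2 hδ.le hd
    (fun j i i' h => hsep j j i i' rfl h) (U₂ᵀ * tU₁) (V₂ᵀ * tV₁)
  have hQ := sq_mul_frobNorm_sq_le_mul_diagonal hδ.le hd (U₃ᵀ * tU₁)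
  have hRle := frobNorm_transpose_mul_sq_le _ _ hUo' (A * tV₁ - tU₁ * E)
  have hSle := frobNorm_transpose_mul_sq_le _ _ hVo' (Aᵀ * tU₁ - tV₁ * E)
  rw [hR, frobNorm_fromRows_sq, frobNorm_neg] at hRle
  rw [hS] at hSle
  rw [← hE] at hPY hQ
  refine sqrt_le_sqrt_div_of_sq_mul_le hδ (by positivity) ?_
  rw [transpose_fromCols, fromRows_mul, frobNorm_fromRows_sq]
  linarith

/-- Wedin's sin-Θ theorem (as restated in the paper). -/
theorem wedin_sin_theta
    {m n k₁ k₂ k₃ l₁ l₂ r tk₂ tk₃ tl₂ : ℕ}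
    (A At : Matrix (Fin m) (Fin n) ℝ)
    (U₁ : Matrix (Fin m) (Fin k₁) ℝ) (U₂ : Matrix (Fin m) (Fin k₂) ℝ)
    (U₃ : Matrix (Fin m) (Fin k₃) ℝ)
    (V₁ : Matrix (Fin n) (Fin l₁) ℝ) (V₂ : Matrix (Fin n) (Fin l₂) ℝ)
    (tU₁ : Matrix (Fin m) (Fin r) ℝ) (tU₂ : Matrix (Fin m) (Fin tk₂) ℝ)
    (tU₃ : Matrix (Fin m) (Fin tk₃) ℝ)
    (tV₁ : Matrix (Fin n) (Fin r) ℝ) (tV₂ : Matrix (Fin n) (Fin tl₂) ℝ)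
    -- [U₁ U₂ U₃] is orthogonal
    (hUo : (fromCols U₁ (fromCols U₂ U₃))ᵀ * fromCols U₁ (fromCols U₂ U₃) = 1)
    (hUo' : fromCols U₁ (fromCols U₂ U₃) * (fromCols U₁ (fromCols U₂ U₃))ᵀ = 1)
    -- [V₁ V₂] is orthogonal
    (hVo : (fromCols V₁ V₂)ᵀ * fromCols V₁ V₂ = 1)
    (hVo' : fromCols V₁ V₂ * (fromCols V₁ V₂)ᵀ = 1)
    -- [Ũ₁ Ũ₂ Ũ₃] is orthogonal
    (htUo : (fromCols tU₁ (fromCols tU₂ tU₃))ᵀ * fromCols tU₁ (fromCols tU₂ tU₃) = 1)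
    (htUo' : fromCols tU₁ (fromCols tU₂ tU₃) * (fromCols tU₁ (fromCols tU₂ tU₃))ᵀ = 1)
    -- [Ṽ₁ Ṽ₂] is orthogonal
    (htVo : (fromCols tV₁ tV₂)ᵀ * fromCols tV₁ tV₂ = 1)
    (htVo' : fromCols tV₁ tV₂ * (fromCols tV₁ tV₂)ᵀ = 1)
    -- block structure of A
    (hS1 : RectDiagNonneg (U₁ᵀ * A * V₁))
    (hS2 : RectDiagNonneg (U₂ᵀ * A * V₂))
    (hZ₁ : U₁ᵀ * A * V₂ = 0) (hZ₂ : U₂ᵀ * A * V₁ = 0)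
    (hZ₃ : U₃ᵀ * A * V₁ = 0) (hZ₄ : U₃ᵀ * A * V₂ = 0)
    -- block structure of Ã
    (htS1 : RectDiagNonneg (tU₁ᵀ * At * tV₁))
    (htS2 : RectDiagNonneg (tU₂ᵀ * At * tV₂))
    (htZ₁ : tU₁ᵀ * At * tV₂ = 0) (htZ₂ : tU₂ᵀ * At * tV₁ = 0)
    (htZ₃ : tU₃ᵀ * At * tV₁ = 0) (htZ₄ : tU₃ᵀ * At * tV₂ = 0)
    (δ : ℝ) (hδ : 0 < δ)
    -- every diagonal entry of Σ̃₁ differs from every diagonal entry of Σ₂ by at least δ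
    (hsep : ∀ (i : Fin r) (j : Fin r) (i' : Fin k₂) (j' : Fin l₂),
      (i : ℕ) = (j : ℕ) → (i' : ℕ) = (j' : ℕ) →
        δ ≤ |(tU₁ᵀ * At * tV₁) i j - (U₂ᵀ * A * V₂) i' j'|)
    -- every diagonal entry of Σ̃₁ is at least δ
    (hmin : ∀ (i : Fin r) (j : Fin r), (i : ℕ) = (j : ℕ) → δ ≤ (tU₁ᵀ * At * tV₁) i j) :
    -- conclusion with R = AṼ₁ − Ũ₁Σ̃₁, S = AᵀŨ₁ − Ṽ₁Σ̃₁, U₁⊥ = [U₂ U₃], V₁⊥ = V₂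
    Real.sqrt (frobNorm ((fromCols U₂ U₃)ᵀ * tU₁) ^ 2 + frobNorm (V₂ᵀ * tV₁) ^ 2) ≤
      Real.sqrt (frobNorm (A * tV₁ - tU₁ * (tU₁ᵀ * At * tV₁)) ^ 2 +
        frobNorm (Aᵀ * tU₁ - tV₁ * (tU₁ᵀ * At * tV₁)) ^ 2) / δ :=
  wedin_sin_theta_general A At U₁ U₂ U₃ V₁ V₂ tU₁ tV₁ hUo' hVo' hS2 hZ₁ hZ₂ hZ₃ hZ₄ htS1 δ hδ hsep
    hmin
end

section
/- Subspace-angle bound from matrix estimation error (deterministic core of Theorem 3): Let Θ*, Θ̂ ∈ ℝ^{d₁×d₂}. Suppose Θ* = U*S*V*ᵀ where U* ∈ ℝ^{d₁×r} and V* ∈ ℝ^{d₂×r} have orthonormal columns and S* ∈ ℝ^{r×r} is diagonal with every diagonal entry at least s_r* > 0. Suppose Θ̂ = ÛŜV̂ᵀ where Û ∈ ℝ^{d₁×r} and V̂ ∈ ℝ^{d₂×r} have orthonormal columns and Ŝ ∈ ℝ^{r×r} is diagonal with nonnegative entries. Let Û⊥ ∈ ℝ^{d₁×(d₁−r)} have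 orthonormal columns spanning the orthogonal complement of the column space of Û, and let V̂⊥ ∈ ℝ^{d₂×(d₂−r)} have orthonormal columns spanning the orthogonal complement of the column space of V̂. Then ‖Û⊥ᵀU*‖_F · ‖V̂⊥ᵀV*‖_F ≤ ‖Θ̂ − Θ*‖_F² / (s_r*)². -/
open Matrix

noncomputable def fsq {m n : Type*} [Fintype m] [Fintype n] (M : Matrix m n ℝ) : ℝ :=
  ∑ i, ∑ j, (M i j) ^ 2

lemma fsq_nonneg {m n : Type*} [Fintype m] [Fintype n] (M : Matrix m n ℝ) : 0 ≤ fsq M :=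
  Finset.sum_nonneg fun _ _ => Finset.sum_nonneg fun _ _ => sq_nonneg _

lemma fsq_eq_trace {m n : Type*} [Fintype m] [Fintype n] (M : Matrix m n ℝ) :
    fsq M = Matrix.trace (Mᵀ * M) := by
  simp [fsq, Matrix.trace, Matrix.mul_apply, Matrix.diag, sq]
  exact Finset.sum_comm

lemma fsq_transpose {m n : Type*} [Fintype m] [Fintype n] (M : Matrix m n ℝ) :
    fsq Mᵀ = fsq M := by
  simp [fsq, Matrix.transpose_apply]
  exact Finset.sum_comm

lemma fsq_neg {m n : Type*} [Fintype m] [Fintype n] (M : Matrix m n ℝ) :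
    fsq (-M) = fsq M := by
  simp [fsq]

lemma fsq_mul_transpose_right {m n r : Type*} [Fintype m] [Fintype n] [Fintype r] [DecidableEq r]
    (M : Matrix m r ℝ) (Q : Matrix n r ℝ) (hQ : Qᵀ * Q = 1) :
    fsq (M * Qᵀ) = fsq M := by
  rw [fsq_eq_trace, fsq_eq_trace, Matrix.transpose_mul, Matrix.transpose_transpose]
  have h : Q * Mᵀ * (M * Qᵀ) = Q * (Mᵀ * M * Qᵀ) := by simp only [Matrix.mul_assoc]
  rw [h, Matrix.trace_mul_comm, Matrix.mul_assoc, hQ, Matrix.mul_one]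

lemma fsq_proj_le {m n r q : Type*} [Fintype m] [Fintype n] [Fintype r] [Fintype q] [DecidableEq m]
    (M : Matrix m n ℝ) (P : Matrix m r ℝ) (Q : Matrix m q ℝ)
    (hc : Q * Qᵀ + P * Pᵀ = 1) :
    fsq (Pᵀ * M) ≤ fsq M := by
  have h1 : fsq (Pᵀ * M) = Matrix.trace (Mᵀ * (P * Pᵀ) * M) := by
    rw [fsq_eq_trace, Matrix.transpose_mul, Matrix.transpose_transpose]
    congr 1; simp only [Matrix.mul_assoc]
  have h2 : fsq (Qᵀ * M) = Matrix.trace (Mᵀ * (Q * Qᵀ) * M) := by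
    rw [fsq_eq_trace, Matrix.transpose_mul, Matrix.transpose_transpose]
    congr 1; simp only [Matrix.mul_assoc]
  have h3 : P * Pᵀ = 1 - Q * Qᵀ := by rw [← hc]; abel
  have h4 : fsq (Pᵀ * M) = fsq M - fsq (Qᵀ * M) := by
    rw [h1, h2, h3, fsq_eq_trace]
    simp [Matrix.mul_sub, Matrix.sub_mul, Matrix.trace_sub]
  linarith [fsq_nonneg (Qᵀ * M), h4]

lemma fsq_mul_diag_ge {m r : Type*} [Fintype m] [Fintype r] [DecidableEq r]
    (A : Matrix m r ℝ) (S : Matrix r r ℝ) (sr : ℝ)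
    (hD : S.IsDiag) (hsr : 0 < sr) (hLb : ∀ i, sr ≤ S i i) :
    sr ^ 2 * fsq A ≤ fsq (A * S) := by
  have key : ∀ i j, (A * S) i j = A i j * S j j := by
    intro i j
    rw [Matrix.mul_apply]
    apply Finset.sum_eq_single j
    · intro k _ hk; rw [hD hk, mul_zero]
    · intro h; exact absurd (Finset.mem_univ j) h
  rw [fsq, fsq, Finset.mul_sum]
  apply Finset.sum_le_sum
  intro i _
  rw [Finset.mul_sum]
  apply Finset.sum_le_sum
  intro j _
  rw [key i j, mul_pow]
  have h1 : sr ^ 2 ≤ S j j ^ 2 := by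
    apply pow_le_pow_left₀ hsr.le (hLb j)
  nlinarith [sq_nonneg (A i j)]

/-- Generic one-sided bound. -/
lemma one_side {d₁ d₂ r p : Type*} [Fintype d₁] [Fintype d₂] [Fintype r] [Fintype p]
    [DecidableEq d₁] [DecidableEq r]
    (Us : Matrix d₁ r ℝ) (Vs : Matrix d₂ r ℝ) (Ss : Matrix r r ℝ) (sr : ℝ)
    (Uh : Matrix d₁ r ℝ) (Vh : Matrix d₂ r ℝ) (Sh : Matrix r r ℝ)
    (Uperp : Matrix d₁ p ℝ)
    (hVs : Vsᵀ * Vs = 1) (hSsDiag : Ss.IsDiag) (hsr : 0 < sr) (hSsLb : ∀ i, sr ≤ Ss i i)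
    (hUperpOrth : Uhᵀ * Uperp = 0)
    (hUcomplete : Uh * Uhᵀ + Uperp * Uperpᵀ = 1) :
    sr ^ 2 * fsq (Uperpᵀ * Us) ≤ fsq (Uh * Sh * Vhᵀ - Us * Ss * Vsᵀ) := by
  set E := Uh * Sh * Vhᵀ - Us * Ss * Vsᵀ with hE
  have hPU : Uperpᵀ * Uh = 0 := by
    have := congrArg Matrix.transpose hUperpOrth
    simpa using this
  have h1 : Uperpᵀ * E = -((Uperpᵀ * Us) * Ss * Vsᵀ) := by
    rw [hE, Matrix.mul_sub]
    have : Uperpᵀ * (Uh * Sh * Vhᵀ) = 0 := by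
      rw [← Matrix.mul_assoc, ← Matrix.mul_assoc, hPU, Matrix.zero_mul, Matrix.zero_mul]
    rw [this, ← Matrix.mul_assoc, ← Matrix.mul_assoc, zero_sub]
  have h2 : fsq (Uperpᵀ * E) ≤ fsq E := fsq_proj_le E Uperp Uh hUcomplete
  have h3 : fsq (Uperpᵀ * E) = fsq ((Uperpᵀ * Us) * Ss) := by
    rw [h1, fsq_neg, fsq_mul_transpose_right _ Vs hVs]
  have h4 := fsq_mul_diag_ge (Uperpᵀ * Us) Ss sr hSsDiag hsr hSsLb
  linarith

lemma diag_transpose_eq {r : Type*} [Fintype r] (S : Matrix r r ℝ) (h : S.IsDiag) : Sᵀ = S := by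
  ext i j
  by_cases hij : i = j
  · subst hij; rfl
  · rw [Matrix.transpose_apply, h hij, h (Ne.symm hij)]

/-- Subspace-angle bound from matrix estimation error (deterministic core of Theorem 3). -/
theorem subspace_angle_bound
    {d₁ d₂ r : ℕ}
    (Θs Θh : Matrix (Fin d₁) (Fin d₂) ℝ)
    (Us : Matrix (Fin d₁) (Fin r) ℝ) (Vs : Matrix (Fin d₂) (Fin r) ℝ)
    (Ss : Matrix (Fin r) (Fin r) ℝ) (sr : ℝ)
    (Uh : Matrix (Fin d₁) (Fin r) ℝ) (Vh : Matrix (Fin d₂) (Fin r) ℝ)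
    (Sh : Matrix (Fin r) (Fin r) ℝ)
    (Uperp : Matrix (Fin d₁) (Fin (d₁ - r)) ℝ) (Vperp : Matrix (Fin d₂) (Fin (d₂ - r)) ℝ)
    -- Θ* = U* S* V*ᵀ, U*, V* orthonormal columns, S* diagonal with entries ≥ s_r* > 0
    (hΘs : Θs = Us * Ss * Vsᵀ)
    (hUs : Usᵀ * Us = 1) (hVs : Vsᵀ * Vs = 1)
    (hSsDiag : Ss.IsDiag) (hsr : 0 < sr) (hSsLb : ∀ i, sr ≤ Ss i i)
    -- Θ̂ = Û Ŝ V̂ᵀ, Û, V̂ orthonormal columns, Ŝ diagonal with nonnegative entries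
    (hΘh : Θh = Uh * Sh * Vhᵀ)
    (hUh : Uhᵀ * Uh = 1) (hVh : Vhᵀ * Vh = 1)
    (hShDiag : Sh.IsDiag) (hShNonneg : ∀ i, 0 ≤ Sh i i)
    -- Û⊥ has orthonormal columns spanning the orthogonal complement of col(Û)
    (hUperp : Uperpᵀ * Uperp = 1) (hUperpOrth : Uhᵀ * Uperp = 0)
    (hUcomplete : Uh * Uhᵀ + Uperp * Uperpᵀ = 1)
    -- V̂⊥ has orthonormal columns spanning the orthogonal complement of col(V̂)
    (hVperp : Vperpᵀ * Vperp = 1) (hVperpOrth : Vhᵀ * Vperp = 0)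
    (hVcomplete : Vh * Vhᵀ + Vperp * Vperpᵀ = 1) :
    frobNorm (Uperpᵀ * Us) * frobNorm (Vperpᵀ * Vs) ≤ frobNorm (Θh - Θs) ^ 2 / sr ^ 2 := by
  set E := Θh - Θs with hEdef
  have hE : E = Uh * Sh * Vhᵀ - Us * Ss * Vsᵀ := by rw [hEdef, hΘh, hΘs]
  have hsr2 : (0:ℝ) < sr ^ 2 := by positivity
  -- first bound
  have h1 : sr ^ 2 * fsq (Uperpᵀ * Us) ≤ fsq E := by
    rw [hE]
    exact one_side Us Vs Ss sr Uh Vh Sh Uperp hVs hSsDiag hsr hSsLb hUperpOrth hUcomplete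
  -- second bound, via transpose
  have hET : Eᵀ = Vh * Sh * Uhᵀ - Vs * Ss * Usᵀ := by
    rw [hE, Matrix.transpose_sub]
    simp only [Matrix.transpose_mul, Matrix.transpose_transpose,
      diag_transpose_eq Ss hSsDiag, diag_transpose_eq Sh hShDiag, Matrix.mul_assoc]
  have h2 : sr ^ 2 * fsq (Vperpᵀ * Vs) ≤ fsq E := by
    have := one_side Vs Us Ss sr Vh Uh Sh Vperp hUs hSsDiag hsr hSsLb hVperpOrth hVcomplete
    have heq : Vh * Sh * Uhᵀ - Vs * Ss * Usᵀ = Eᵀ := by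
      rw [hET]
    rw [heq, fsq_transpose] at this
    exact this
  have hA : fsq (Uperpᵀ * Us) ≤ fsq E / sr ^ 2 := by
    rw [le_div_iff₀ hsr2]; linarith
  have hB : fsq (Vperpᵀ * Vs) ≤ fsq E / sr ^ 2 := by
    rw [le_div_iff₀ hsr2]; linarith
  have hf1 : frobNorm (Uperpᵀ * Us) = Real.sqrt (fsq (Uperpᵀ * Us)) := rfl
  have hf2 : frobNorm (Vperpᵀ * Vs) = Real.sqrt (fsq (Vperpᵀ * Vs)) := rfl
  have hf3 : frobNorm (Θh - Θs) = Real.sqrt (fsq E) := rfl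
  rw [hf1, hf2, hf3]
  have hEnn : 0 ≤ fsq E / sr ^ 2 := div_nonneg (fsq_nonneg E) hsr2.le
  have hsq : Real.sqrt (fsq E) ^ 2 = fsq E := Real.sq_sqrt (fsq_nonneg E)
  rw [hsq]
  calc Real.sqrt (fsq (Uperpᵀ * Us)) * Real.sqrt (fsq (Vperpᵀ * Vs))
      ≤ Real.sqrt (fsq E / sr ^ 2) * Real.sqrt (fsq E / sr ^ 2) :=
        mul_le_mul (Real.sqrt_le_sqrt hA) (Real.sqrt_le_sqrt hB)
          (Real.sqrt_nonneg _) (Real.sqrt_nonneg _)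
    _ = fsq E / sr ^ 2 := Real.mul_self_sqrt hEnn
end

section
/- Instantaneous regret bound for the optimistic arm: Let V ∈ ℝ^{p×p} be symmetric positive definite, θ̂ ∈ ℝ^p, β ≥ 0, and let c = {θ ∈ ℝ^p : (θ − θ̂)ᵀV(θ − θ̂) ≤ β}. Let A ⊆ ℝ^p be a set of arms, let θ* ∈ c, and suppose a_t ∈ A satisfies sup_{θ ∈ c} ⟨θ, a_t⟩ ≥ sup_{θ ∈ c} ⟨θ, a⟩ for every a ∈ A (the optimistic choice). Then for every a* ∈ A, ⟨θ*, a*⟩ − ⟨θ*, a_t⟩ ≤ 2√β·√(a_tᵀV⁻¹a_t). -/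
/-!
Write `‖a‖_{V⁻¹} = √(aᵀV⁻¹a)`. Cauchy–Schwarz for the inner product `⟨x, y⟩_V = xᵀVy`,
applied to `x` and `V⁻¹a`, gives `|⟨x, a⟩| ≤ ‖x‖_V ‖a‖_{V⁻¹}`, so every `θ` in the ellipsoid
`c` satisfies `|⟨θ, a⟩ - ⟨θ̂, a⟩| ≤ √β ‖a‖_{V⁻¹}`. Hence
`⟨θ*, a*⟩ ≤ sup_c ⟨·, a*⟩ ≤ sup_c ⟨·, a_t⟩ ≤ ⟨θ̂, a_t⟩ + √β ‖a_t‖_{V⁻¹} ≤ ⟨θ*, a_t⟩ + 2√β ‖a_t‖_{V⁻¹}`.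
-/

open Matrix

variable {n : Type*} [Fintype n]

theorem Matrix.PosSemidef.abs_dotProduct_mulVec_le {V : Matrix n n ℝ} (hV : V.PosSemidef)
    (x y : n → ℝ) : |x ⬝ᵥ (V *ᵥ y)| ≤ √(x ⬝ᵥ (V *ᵥ x)) * √(y ⬝ᵥ (V *ᵥ y)) := by
  let := V.toSeminormedAddCommGroup hV
  let := V.toInnerProductSpace hV
  have hinner (u v : n → ℝ) : inner ℝ u v = u ⬝ᵥ (V *ᵥ v) := dotProduct_comm _ _
  have h := abs_real_inner_le_norm x y
  rwa [norm_eq_sqrt_real_inner, norm_eq_sqrt_real_inner, hinner, hinner, hinner] at h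

theorem Matrix.PosDef.abs_dotProduct_le [DecidableEq n] {V : Matrix n n ℝ} (hV : V.PosDef)
    (x a : n → ℝ) : |x ⬝ᵥ a| ≤ √(x ⬝ᵥ (V *ᵥ x)) * √(a ⬝ᵥ (V⁻¹ *ᵥ a)) := by
  have hVinv : V *ᵥ (V⁻¹ *ᵥ a) = a := by
    rw [mulVec_mulVec, mul_nonsing_inv _ ((isUnit_iff_isUnit_det V).mp hV.isUnit), one_mulVec]
  simpa only [hVinv, dotProduct_comm (V⁻¹ *ᵥ a) a] using
    hV.posSemidef.abs_dotProduct_mulVec_le x (V⁻¹ *ᵥ a)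

def ellipsoid (V : Matrix n n ℝ) (θ₀ : n → ℝ) (β : ℝ) : Set (n → ℝ) :=
  {θ | (θ - θ₀) ⬝ᵥ (V *ᵥ (θ - θ₀)) ≤ β}

theorem abs_dotProduct_sub_le_of_mem_ellipsoid [DecidableEq n] {V : Matrix n n ℝ}
    (hV : V.PosDef) {θ₀ θ : n → ℝ} {β : ℝ} (hθ : θ ∈ ellipsoid V θ₀ β) (a : n → ℝ) :
    |θ ⬝ᵥ a - θ₀ ⬝ᵥ a| ≤ √β * √(a ⬝ᵥ (V⁻¹ *ᵥ a)) := by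
  rw [← sub_dotProduct]
  exact (hV.abs_dotProduct_le _ a).trans
    (mul_le_mul_of_nonneg_right (Real.sqrt_le_sqrt hθ) (Real.sqrt_nonneg _))

theorem sSup_image_dotProduct_ellipsoid_le [DecidableEq n] {V : Matrix n n ℝ}
    (hV : V.PosDef) {θ₀ : n → ℝ} {β : ℝ} (hne : (ellipsoid V θ₀ β).Nonempty) (a : n → ℝ) :
    sSup ((· ⬝ᵥ a) '' ellipsoid V θ₀ β) ≤ θ₀ ⬝ᵥ a + √β * √(a ⬝ᵥ (V⁻¹ *ᵥ a)) := by
  refine csSup_le (hne.image _) ?_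
  rintro _ ⟨θ, hθ, rfl⟩
  linarith [(abs_le.mp (abs_dotProduct_sub_le_of_mem_ellipsoid hV hθ a)).2]

theorem dotProduct_le_sSup_image_ellipsoid [DecidableEq n] {V : Matrix n n ℝ}
    (hV : V.PosDef) {θ₀ θ : n → ℝ} {β : ℝ} (hθ : θ ∈ ellipsoid V θ₀ β) (a : n → ℝ) :
    θ ⬝ᵥ a ≤ sSup ((· ⬝ᵥ a) '' ellipsoid V θ₀ β) := by
  refine le_csSup ⟨θ₀ ⬝ᵥ a + √β * √(a ⬝ᵥ (V⁻¹ *ᵥ a)), ?_⟩ ⟨θ, hθ, rfl⟩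
  rintro _ ⟨θ', hθ', rfl⟩
  linarith [(abs_le.mp (abs_dotProduct_sub_le_of_mem_ellipsoid hV hθ' a)).2]

theorem optimistic_regret_bound_general
    {p : ℕ}
    (V : Matrix (Fin p) (Fin p) ℝ) (hV : V.PosDef)
    (θhat : Fin p → ℝ) (β : ℝ)
    (c : Set (Fin p → ℝ))
    (hc : c = {θ : Fin p → ℝ | (θ - θhat) ⬝ᵥ (V *ᵥ (θ - θhat)) ≤ β})
    (A : Set (Fin p → ℝ))
    (θstar : Fin p → ℝ) (hθstar : θstar ∈ c)
    (a_t : Fin p → ℝ)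
    (hopt : ∀ a ∈ A, sSup ((fun θ : Fin p → ℝ => θ ⬝ᵥ a) '' c) ≤
      sSup ((fun θ : Fin p → ℝ => θ ⬝ᵥ a_t) '' c)) :
    ∀ astar ∈ A, θstar ⬝ᵥ astar - θstar ⬝ᵥ a_t ≤
      2 * Real.sqrt β * Real.sqrt (a_t ⬝ᵥ (V⁻¹ *ᵥ a_t)) := by
  intro astar hastar
  change c = ellipsoid V θhat β at hc
  subst hc
  have hlower := (abs_le.mp (abs_dotProduct_sub_le_of_mem_ellipsoid hV hθstar a_t)).1
  calc θstar ⬝ᵥ astar - θstar ⬝ᵥ a_t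
      ≤ sSup ((· ⬝ᵥ astar) '' ellipsoid V θhat β) - θstar ⬝ᵥ a_t :=
        sub_le_sub_right (dotProduct_le_sSup_image_ellipsoid hV hθstar astar) _
    _ ≤ sSup ((· ⬝ᵥ a_t) '' ellipsoid V θhat β) - θstar ⬝ᵥ a_t :=
        sub_le_sub_right (hopt astar hastar) _
    _ ≤ 2 * √β * √(a_t ⬝ᵥ (V⁻¹ *ᵥ a_t)) := by
        linarith [sSup_image_dotProduct_ellipsoid_le hV ⟨θstar, hθstar⟩ a_t]

/-- Instantaneous regret bound for the optimistic arm. -/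
theorem optimistic_regret_bound
    {p : ℕ}
    (V : Matrix (Fin p) (Fin p) ℝ) (hV : V.PosDef)
    (θhat : Fin p → ℝ) (β : ℝ) (hβ : 0 ≤ β)
    (c : Set (Fin p → ℝ))
    (hc : c = {θ : Fin p → ℝ | (θ - θhat) ⬝ᵥ (V *ᵥ (θ - θhat)) ≤ β})
    (A : Set (Fin p → ℝ))
    (θstar : Fin p → ℝ) (hθstar : θstar ∈ c)
    (a_t : Fin p → ℝ) (ha_t : a_t ∈ A)
    (hopt : ∀ a ∈ A, sSup ((fun θ : Fin p → ℝ => θ ⬝ᵥ a) '' c) ≤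
      sSup ((fun θ : Fin p → ℝ => θ ⬝ᵥ a_t) '' c)) :
    ∀ astar ∈ A, θstar ⬝ᵥ astar - θstar ⬝ᵥ a_t ≤
      2 * Real.sqrt β * Real.sqrt (a_t ⬝ᵥ (V⁻¹ *ᵥ a_t)) :=
  optimistic_regret_bound_general V hV θhat β c hc A θstar hθstar a_t hopt
end

section
/- Log-determinant bound for the almost-low-dimensional regularizer (Lemma logdet-2): Let p ≥ 1, 1 ≤ k ≤ p, λ > 0, T ≥ 1, and set λ⊥ = T/(k·log(1 + T/λ)). Let Λ ∈ ℝ^{p×p} be the diagonal matrix whose first k diagonal entries equal λ and whose remaining p−k diagonal entries equal λ⊥. Let a₁, …, a_T ∈ ℝ^p satisfy ‖a_t‖₂ ≤ 1 for every t, and let V_T = Λ + Σ_{t=1}^{T} a_t a_tᵀ. Then log(det(V_T)/det(Λ)) ≤ 2k·log(1 + T/λ). -/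
open Matrix Finset

/-!
By Hadamard's inequality `det V ≤ ∏ Vᵢᵢ`, the log-determinant ratio is at most
`∑ᵢ log (1 + Sᵢ / Λᵢᵢ)`, where `Sᵢ = ∑ₜ (aₜ)ᵢ²` satisfies `∑ᵢ Sᵢ ≤ T`. Each of the first `k`
coordinates contributes at most `log (1 + T / λ)`; on the others `log (1 + x) ≤ x` bounds the
total contribution by `∑ᵢ Sᵢ / λ⊥ ≤ T / λ⊥ = k log (1 + T / λ)`.
-/

namespace Matrix

theorem sum_vecMulVec_self_apply_self {ι n : Type*} (s : Finset ι) (a : ι → n → ℝ)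
    (i : n) :
    (∑ t ∈ s, vecMulVec (a t) (a t)) i i = ∑ t ∈ s, a t i ^ 2 := by
  simp [sum_apply, vecMulVec_apply, sq]

theorem posSemidef_sum_vecMulVec_self {ι n : Type*} [Fintype n] (s : Finset ι)
    (a : ι → n → ℝ) :
    (∑ t ∈ s, vecMulVec (a t) (a t)).PosSemidef :=
  posSemidef_sum s fun t _ => by simpa using posSemidef_vecMulVec_self_star (a t)

variable {n : Type*} [Fintype n] [DecidableEq n]

theorem PosSemidef.det_le_exp_trace_sub_card {A : Matrix n n ℝ} (hA : A.PosSemidef) :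
    A.det ≤ Real.exp (A.trace - Fintype.card n) := by
  rw [hA.isHermitian.det_eq_prod_eigenvalues, hA.isHermitian.trace_eq_sum_eigenvalues]
  calc ∏ i, hA.isHermitian.eigenvalues i
      ≤ ∏ i, Real.exp (hA.isHermitian.eigenvalues i - 1) :=
        prod_le_prod (fun i _ => hA.eigenvalues_nonneg i) fun i _ => by
          linarith [Real.add_one_le_exp (hA.isHermitian.eigenvalues i - 1)]
    _ = Real.exp ((∑ i, hA.isHermitian.eigenvalues i) - Fintype.card n) := by
        rw [← Real.exp_sum, sum_sub_distrib]; simp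

/-- Hadamard's inequality. -/
theorem PosDef.det_le_prod_diag {A : Matrix n n ℝ} (hA : A.PosDef) : A.det ≤ ∏ i, A i i := by
  have hpos : ∀ i, 0 < A i i := fun i => hA.diag_pos
  -- rescale `A` to a positive semidefinite matrix with unit diagonal
  set E : Matrix n n ℝ := diagonal fun i => (√(A i i))⁻¹
  have hB : (E * A * E).PosSemidef := by
    simpa [E] using hA.posSemidef.mul_mul_conjTranspose_same E
  have hdiag : ∀ i, (E * A * E) i i = 1 := fun i => by
    have := Real.sq_sqrt (hpos i).le
    simp only [E, mul_diagonal, diagonal_mul]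
    field_simp
    rw [this, div_self (hpos i).ne']
  have hdet : (E * A * E).det = A.det / ∏ i, A i i := by
    simp only [E, det_mul, det_diagonal, div_eq_mul_inv, ← prod_inv_distrib]
    rw [mul_comm, ← mul_assoc, ← prod_mul_distrib]
    simp [← mul_inv, Real.mul_self_sqrt (hpos _).le, mul_comm]
  have hle := hB.det_le_exp_trace_sub_card
  rw [hdet, trace, Fintype.card_eq_sum_ones] at hle
  simpa [hdiag, div_le_one (prod_pos fun i _ => hpos i)] using hle

theorem log_det_diagonal_add_div_le {d : n → ℝ} (hd : ∀ i, 0 < d i) {M : Matrix n n ℝ}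
    (hM : M.PosSemidef) :
    Real.log ((diagonal d + M).det / (diagonal d).det) ≤ ∑ i, Real.log (1 + M i i / d i) := by
  have hpd : (diagonal d + M).PosDef := (PosDef.diagonal hd).add_posSemidef hM
  have hdiag_pos : ∀ i, 0 < d i + M i i := fun i => by linarith [hd i, hM.diag_nonneg (i := i)]
  calc Real.log ((diagonal d + M).det / (diagonal d).det)
      ≤ Real.log ((∏ i, (d i + M i i)) / ∏ i, d i) := by
        rw [det_diagonal]
        refine Real.log_le_log (div_pos hpd.det_pos (prod_pos fun i _ => hd i)) ?_
        exact div_le_div_of_nonneg_right (by simpa using hpd.det_le_prod_diag)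
          (prod_nonneg fun i _ => (hd i).le)
    _ = ∑ i, Real.log (1 + M i i / d i) := by
        rw [← prod_div_distrib, Real.log_prod fun i _ => (div_pos (hdiag_pos i) (hd i)).ne']
        refine sum_congr rfl fun i _ => ?_
        rw [one_add_div (hd i).ne']

end Matrix

theorem sum_sum_sq_le_card {ι n : Type*} [Fintype n] {s : Finset ι} {a : ι → n → ℝ}
    (ha : ∀ t ∈ s, √(∑ i, a t i ^ 2) ≤ 1) : ∑ i, ∑ t ∈ s, a t i ^ 2 ≤ #s := by
  rw [sum_comm, card_eq_sum_ones, Nat.cast_sum, Nat.cast_one]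
  exact sum_le_sum fun t ht => Real.sqrt_le_one.mp (ha t ht)

theorem sum_log_one_add_div_ite_le {ι : Type*} [Fintype ι] (P : ι → Prop) [DecidablePred P]
    {S : ι → ℝ} (hS : ∀ i, 0 ≤ S i) {T lam lamPerp : ℝ} (hST : ∑ i, S i ≤ T) (hlam : 0 < lam)
    (hlamPerp : 0 < lamPerp) :
    ∑ i, Real.log (1 + S i / if P i then lam else lamPerp)
      ≤ #{i | P i} * Real.log (1 + T / lam) + T / lamPerp := by
  have hcoord : ∀ i, Real.log (1 + S i / if P i then lam else lamPerp)
      ≤ (if P i then Real.log (1 + T / lam) else 0) + S i / lamPerp := fun i => by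
    have hSi : S i ≤ T := (single_le_sum (fun j _ => hS j) (mem_univ i)).trans hST
    have hperp : 0 ≤ S i / lamPerp := div_nonneg (hS i) hlamPerp.le
    split_ifs
    · have : Real.log (1 + S i / lam) ≤ Real.log (1 + T / lam) :=
        Real.log_le_log (add_pos_of_pos_of_nonneg one_pos (div_nonneg (hS i) hlam.le))
          (by gcongr)
      linarith
    · linarith [Real.log_le_sub_one_of_pos (add_pos_of_pos_of_nonneg one_pos hperp)]
  calc ∑ i, Real.log (1 + S i / if P i then lam else lamPerp)
      ≤ ∑ i, ((if P i then Real.log (1 + T / lam) else 0) + S i / lamPerp) :=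
        sum_le_sum fun i _ => hcoord i
    _ = #{i | P i} * Real.log (1 + T / lam) + (∑ i, S i) / lamPerp := by
        rw [sum_add_distrib, sum_ite, sum_div]; simp
    _ ≤ #{i | P i} * Real.log (1 + T / lam) + T / lamPerp := by gcongr

theorem logdet_bound_low_dim_general
    {p : ℕ} (k : ℕ) (hk1 : 1 ≤ k)
    (lam : ℝ) (hlam : 0 < lam)
    (T : ℕ) (hT : 1 ≤ T)
    (lamPerp : ℝ) (hlamPerp : lamPerp = (T : ℝ) / (k * Real.log (1 + (T : ℝ) / lam)))
    (Λ : Matrix (Fin p) (Fin p) ℝ)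
    (hΛ : Λ = Matrix.diagonal (fun i : Fin p => if (i : ℕ) < k then lam else lamPerp))
    (a : ℕ → Fin p → ℝ)
    (ha : ∀ t ∈ Finset.range T, Real.sqrt (∑ i, a t i ^ 2) ≤ 1)
    (VT : Matrix (Fin p) (Fin p) ℝ)
    (hVT : VT = Λ + ∑ t ∈ Finset.range T, Matrix.vecMulVec (a t) (a t)) :
    Real.log (VT.det / Λ.det) ≤ 2 * k * Real.log (1 + (T : ℝ) / lam) := by
  set L := Real.log (1 + (T : ℝ) / lam)
  set S : Fin p → ℝ := fun i => ∑ t ∈ range T, a t i ^ 2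
  have hT_pos : (0 : ℝ) < T := by exact_mod_cast hT
  have hL : 0 < L := Real.log_pos (by linarith [div_pos hT_pos hlam])
  have hlamPerp_pos : 0 < lamPerp := by rw [hlamPerp]; positivity
  have hcard : #{i : Fin p | (i : ℕ) < k} ≤ k :=
    Fin.card_filter_val_lt.trans_le (min_le_right p k)
  calc Real.log (VT.det / Λ.det)
      ≤ ∑ i : Fin p, Real.log (1 + S i / if (i : ℕ) < k then lam else lamPerp) := by
        subst hVT hΛ
        simpa [sum_vecMulVec_self_apply_self] using
          log_det_diagonal_add_div_le (fun i => by split_ifs <;> assumption)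
            (posSemidef_sum_vecMulVec_self (range T) a)
    _ ≤ #{i : Fin p | (i : ℕ) < k} * L + T / lamPerp :=
        sum_log_one_add_div_ite_le _ (fun i => by positivity) (by simpa using sum_sum_sq_le_card ha)
          hlam hlamPerp_pos
    _ ≤ k * L + T / lamPerp := by gcongr
    _ = 2 * k * L := by rw [hlamPerp]; field_simp; ring

/-- Log-determinant bound for the almost-low-dimensional regularizer. -/
theorem logdet_bound_low_dim
    {p : ℕ} (hp : 1 ≤ p) (k : ℕ) (hk1 : 1 ≤ k) (hkp : k ≤ p)
    (lam : ℝ) (hlam : 0 < lam)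
    (T : ℕ) (hT : 1 ≤ T)
    (lamPerp : ℝ) (hlamPerp : lamPerp = (T : ℝ) / (k * Real.log (1 + (T : ℝ) / lam)))
    (Λ : Matrix (Fin p) (Fin p) ℝ)
    (hΛ : Λ = Matrix.diagonal (fun i : Fin p => if (i : ℕ) < k then lam else lamPerp))
    (a : ℕ → Fin p → ℝ)
    (ha : ∀ t ∈ Finset.range T, Real.sqrt (∑ i, a t i ^ 2) ≤ 1)
    (VT : Matrix (Fin p) (Fin p) ℝ)
    (hVT : VT = Λ + ∑ t ∈ Finset.range T, Matrix.vecMulVec (a t) (a t)) :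
    Real.log (VT.det / Λ.det) ≤ 2 * k * Real.log (1 + (T : ℝ) / lam) :=
  logdet_bound_low_dim_general k hk1 lam hlam T hT lamPerp hlamPerp Λ hΛ a ha VT hVT
end
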